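/- arXiv:1504.05692 — 4 statements merged into one kernel-verified Lean document; each statement's English description precedes it below -/
import Mathlib

section
/- The spectral radius of A equals the maximum frequency f₁ = max_i |{j : x j = x i}|; that is, every eigenvalue λ of A satisfies |λ| ≤ f₁, and f₁ itself is an eigenvalue. -/
theorem voter_matrix_spectral_radius {N : ℕ} {α : Type*} [DecidableEq α] (x : Fin N → α)
    (A : Matrix (Fin N) (Fin N) ℝ)
    (hA : ∀ i j, A i j = if x i = x j then 1 else 0)
    (hN : 1 ≤ N)
    (f₁ : ℕ) (hf₁ : f₁ = Finset.univ.sup fun i => (Finset.univ.filter fun j => x j = x i).card) :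
    (∀ (lam : ℝ) (v : Fin N → ℝ), v ≠ 0 → A.mulVec v = lam • v → |lam| ≤ (f₁ : ℝ)) ∧
      (∃ v : Fin N → ℝ, v ≠ 0 ∧ A.mulVec v = (f₁ : ℝ) • v) := by
  have hrow : ∀ i : Fin N, (∑ j, A i j)
      = ((Finset.univ.filter fun j => x j = x i).card : ℝ) := by
    intro i
    simp only [hA]
    rw [Finset.sum_boole]
    congr 2
    ext j
    simp [eq_comm]
  have hfle : ∀ i : Fin N,
      ((Finset.univ.filter fun j => x j = x i).card : ℝ) ≤ (f₁ : ℝ) := by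
    intro i
    exact_mod_cast hf₁ ▸ Finset.le_sup (f := fun i => (Finset.univ.filter fun j => x j = x i).card) (Finset.mem_univ i)
  constructor
  · intro lam v hv hev
    obtain ⟨i₀, -, hmax⟩ := Finset.exists_max_image Finset.univ (fun i => |v i|)
      ⟨⟨0, hN⟩, Finset.mem_univ _⟩
    have hvi₀ : 0 < |v i₀| := by
      rcases Function.ne_iff.mp hv with ⟨j, hj⟩
      calc 0 < |v j| := abs_pos.mpr hj
        _ ≤ |v i₀| := hmax j (Finset.mem_univ j)
    have h1 : lam * v i₀ = ∑ j, A i₀ j * v j := by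
      have := congrFun hev i₀
      simpa [Matrix.mulVec, dotProduct, eq_comm] using this
    have key : |lam| * |v i₀| ≤ (f₁ : ℝ) * |v i₀| := by
      calc |lam| * |v i₀| = |∑ j, A i₀ j * v j| := by rw [← abs_mul, h1]
        _ ≤ ∑ j, |A i₀ j * v j| := Finset.abs_sum_le_sum_abs _ _
        _ ≤ ∑ j, A i₀ j * |v i₀| := by
            apply Finset.sum_le_sum
            intro j _
            rw [abs_mul, hA]
            by_cases h : x i₀ = x j <;> simp [h, hmax j (Finset.mem_univ j)]
        _ = (∑ j, A i₀ j) * |v i₀| := by rw [Finset.sum_mul]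
        _ ≤ (f₁ : ℝ) * |v i₀| := by
            rw [hrow]
            exact mul_le_mul_of_nonneg_right (hfle i₀) (abs_nonneg _)
    exact le_of_mul_le_mul_right key hvi₀
  · obtain ⟨i₀, -, hi₀⟩ := Finset.exists_mem_eq_sup Finset.univ
      (Finset.univ_nonempty_iff.mpr ⟨⟨0, hN⟩⟩)
      (fun i => (Finset.univ.filter fun j => x j = x i).card)
    refine ⟨fun j => if x j = x i₀ then 1 else 0, ?_, ?_⟩
    · intro h
      have := congrFun h i₀
      simp at this
    · funext i
      simp only [Matrix.mulVec, dotProduct, Pi.smul_apply, smul_eq_mul, hA]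
      by_cases h : x i = x i₀
      · have : ∀ j, (if x i = x j then (1:ℝ) else 0) * (if x j = x i₀ then 1 else 0)
            = if x j = x i₀ then 1 else 0 := by
          intro j
          by_cases hj : x j = x i₀
          · simp [hj, h.trans hj.symm]
          · simp [hj]
        rw [Finset.sum_congr rfl fun j _ => this j, Finset.sum_boole]
        simp [h, hf₁, hi₀]
      · have : ∀ j, (if x i = x j then (1:ℝ) else 0) * (if x j = x i₀ then 1 else 0) = 0 := by
          intro j
          by_cases hj : x j = x i₀
          · have hne : ¬ x i = x j := fun hij => h (hij.trans hj)
            simp [hne]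
          · simp [hj]
        rw [Finset.sum_congr rfl fun j _ => this j]
        simp [h]
end

section
/- The determinants D_n(s) and F_n(s) satisfy the recurrences D_n(s) = s·D_{n−1}(s) + (n−1)·F_{n−1}(s) and F_n(s) = −D_{n−1}(s) + (n−1)·F_{n−1}(s) for n ≥ 2. -/
/-!
Subtracting the first row of the `F`-matrix from the others makes it upper triangular, so
`F_{k+1} = -(s+1)^k`. The first row of the `D`-matrix is that of the `F`-matrix plus
`(s+1) e_1`, and expanding the latter summand along the first row gives
`D_{k+1} = (s+1) D_k + F_{k+1}`, hence `D_{k+1} = (s-k)(s+1)^k`. Both recurrences are then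
polynomial identities in `s`.
-/

open Matrix

section

variable {R : Type*} [CommRing R]

theorem det_updateRow_zero_single_one {n : ℕ} (M : Matrix (Fin (n + 1)) (Fin (n + 1)) R) :
    (M.updateRow 0 (Pi.single 0 1)).det = (M.submatrix Fin.succ Fin.succ).det := by
  rw [det_succ_row_zero, Fin.sum_univ_succ]
  simp only [Fin.val_zero, pow_zero, updateRow_self, Pi.single_eq_same, Fin.succAbove_zero,
    Pi.single_eq_of_ne (Fin.succ_ne_zero _), mul_zero, zero_mul, Finset.sum_const_zero, add_zero,
    one_mul]
  exact congrArg det (submatrix_updateRow_succAbove M _ _ 0)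

def matrixD (s : R) (n : ℕ) : Matrix (Fin n) (Fin n) R :=
  of fun i j => if i = j then s else -1

def matrixF (s : R) (n : ℕ) : Matrix (Fin n) (Fin n) R :=
  of fun i j => if i = j then (if (i : ℕ) = 0 then -1 else s) else -1

theorem det_matrixF_succ (s : R) (n : ℕ) : (matrixF s (n + 1)).det = -(s + 1) ^ n := by
  let B : Matrix (Fin (n + 1)) (Fin (n + 1)) R :=
    of fun i j => if i = 0 then -1 else if i = j then s + 1 else 0
  have hB : (matrixF s (n + 1)).det = B.det := by
    refine det_eq_of_forall_row_eq_smul_add_const (fun i => if i = 0 then 0 else 1) 0 rfl ?_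
    intro i j
    rcases eq_or_ne i 0 with rfl | hi
    · by_cases h : (0 : Fin (n + 1)) = j <;> simp [matrixF, B, h]
    · rcases eq_or_ne i j with rfl | h
      · simp [matrixF, B, hi]
      · simp [matrixF, B, h, hi]
  rw [hB, det_of_isUpperTriangular, Fin.prod_univ_succ]
  · simp [B, Fin.succ_ne_zero]
  · intro i j (hij : j < i)
    have hi : i ≠ 0 := by rintro rfl; exact Fin.not_lt_zero j hij
    simp [B, hi, hij.ne']

theorem det_matrixD_succ_eq_add (s : R) (n : ℕ) :
    (matrixD s (n + 1)).det = (s + 1) * (matrixD s n).det + (matrixF s (n + 1)).det := by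
  have hrow : matrixD s (n + 1) = (matrixF s (n + 1)).updateRow 0
      ((s + 1) • Pi.single 0 1 + matrixF s (n + 1) 0) := by
    ext i j
    rcases eq_or_ne i 0 with rfl | hi
    · rcases eq_or_ne j 0 with rfl | hj
      · simp [matrixD, matrixF]
      · simp [matrixD, matrixF, hj, Ne.symm hj]
    · simp [matrixD, matrixF, hi]
  have hminor : (matrixF s (n + 1)).submatrix Fin.succ Fin.succ = matrixD s n := by
    ext i j
    simp [matrixD, matrixF]
  rw [hrow, det_updateRow_add, det_updateRow_smul, det_updateRow_zero_single_one, hminor,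
    updateRow_eq_self]

theorem det_matrixD_succ (s : R) (n : ℕ) : (matrixD s (n + 1)).det = (s - n) * (s + 1) ^ n := by
  induction n with
  | zero => simp [matrixD]
  | succ n ih =>
    rw [det_matrixD_succ_eq_add, ih, det_matrixF_succ]
    push_cast
    ring

end

theorem DF_recurrences {R : Type*} [CommRing R] (s : R)
    (D F : ℕ → R)
    (hD : ∀ k, D k = (Matrix.of fun i j : Fin k => if i = j then s else -1).det)
    (hF : ∀ k, F k = (Matrix.of fun i j : Fin k =>
        if i = j then (if (i : ℕ) = 0 then -1 else s) else -1).det)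
    (n : ℕ) (hn : 2 ≤ n) :
    D n = s * D (n - 1) + ((n : R) - 1) * F (n - 1) ∧
      F n = -D (n - 1) + ((n : R) - 1) * F (n - 1) := by
  have hD' : ∀ k, D k = (matrixD s k).det := hD
  have hF' : ∀ k, F k = (matrixF s k).det := hF
  obtain ⟨m, rfl⟩ := Nat.exists_eq_add_of_le' hn
  rw [show m + 2 - 1 = m + 1 by omega, hD', hD', hF', hF', det_matrixD_succ, det_matrixD_succ,
    det_matrixF_succ, det_matrixF_succ]
  push_cast
  constructor <;> ring
end

section
/- The spectrum of A consists exactly of 0 (when m < N) together with the set of frequencies {f₁, …, f_m} of the distinct input values. -/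
open Matrix Finset

lemma voter_mem_spectrum_iff {n : ℕ} (A : Matrix (Fin n) (Fin n) ℝ) (lam : ℝ) :
    lam ∈ spectrum ℝ A ↔ ∃ u : Fin n → ℝ, u ≠ 0 ∧ A *ᵥ u = lam • u := by
  rw [spectrum.mem_iff, Matrix.isUnit_iff_isUnit_det, isUnit_iff_ne_zero, not_not,
    ← Matrix.exists_mulVec_eq_zero_iff]
  have key : ∀ u : Fin n → ℝ, (algebraMap ℝ (Matrix (Fin n) (Fin n) ℝ) lam - A) *ᵥ u
      = lam • u - A *ᵥ u := by
    intro u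
    rw [Matrix.sub_mulVec, Algebra.algebraMap_eq_smul_one, Matrix.smul_mulVec,
      Matrix.one_mulVec]
  constructor
  · rintro ⟨u, hu, h⟩
    rw [key] at h
    exact ⟨u, hu, (sub_eq_zero.mp h).symm⟩
  · rintro ⟨u, hu, h⟩
    exact ⟨u, hu, by rw [key, h, sub_self]⟩

theorem voter_matrix_spectrum {N m : ℕ} {α : Type*} [DecidableEq α] (x : Fin N → α)
    (A : Matrix (Fin N) (Fin N) ℝ)
    (hA : ∀ i j, A i j = if x i = x j then 1 else 0)
    (v : Fin m → α) (hv : Function.Injective v)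
    (hcover : ∀ j, ∃ k, x j = v k) (hval : ∀ k, ∃ j, x j = v k)
    (f : Fin m → ℕ) (hf : ∀ k, f k = (Finset.univ.filter fun j => x j = v k).card) :
    spectrum ℝ A = {lam : ℝ | (m < N ∧ lam = 0) ∨ ∃ k, lam = (f k : ℝ)} := by
  -- the class map
  have hc : ∀ i, x i = v ((hcover i).choose) := fun i => (hcover i).choose_spec
  set c : Fin N → Fin m := fun i => (hcover i).choose with hcdef
  have hcsurj : Function.Surjective c := by
    intro k
    obtain ⟨j, hj⟩ := hval k
    exact ⟨j, hv (by rw [← hc j, hj])⟩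
  -- basic mulVec computation
  have hmul : ∀ (u : Fin N → ℝ) (i : Fin N),
      (A *ᵥ u) i = ∑ j, (if x i = x j then u j else 0) := by
    intro u i
    simp [Matrix.mulVec, dotProduct, hA, ite_mul]
  ext lam
  rw [voter_mem_spectrum_iff]
  simp only [Set.mem_setOf_eq]
  constructor
  · rintro ⟨u, hu, hAu⟩
    by_cases hlam : ∃ k, lam = (f k : ℝ)
    · exact Or.inr hlam
    push_neg at hlam
    left
    -- class sums
    set S : Fin m → ℝ := fun k => ∑ j ∈ Finset.univ.filter (fun j => x j = v k), u j with hS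
    have hrow : ∀ i, lam * u i = S (c i) := by
      intro i
      have h1 : (A *ᵥ u) i = S (c i) := by
        show _ = ∑ j ∈ Finset.univ.filter (fun j => x j = v (c i)), u j
        rw [hmul, Finset.sum_filter]
        apply Finset.sum_congr rfl
        intro j _
        congr 1
        apply propext
        constructor
        · intro h; rw [← h]; exact hc i
        · intro h; exact (hc i).trans h.symm
      have h2 : (A *ᵥ u) i = lam * u i := by rw [hAu]; rfl
      rw [← h2, h1]
    have hSzero : ∀ k, S k = 0 := by
      intro k
      have hsum : ∑ i ∈ Finset.univ.filter (fun j => x j = v k), lam * u i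
          = (f k : ℝ) * S k := by
        rw [hf k]
        have : ∀ i ∈ Finset.univ.filter (fun j => x j = v k), lam * u i = S k := by
          intro i hi
          rw [hrow i]
          congr 1
          apply hv
          rw [← hc i]
          exact (Finset.mem_filter.mp hi).2
        rw [Finset.sum_congr rfl this, Finset.sum_const, nsmul_eq_mul]
      rw [← Finset.mul_sum] at hsum
      have hsum' : lam * S k = (f k : ℝ) * S k := hsum
      have : (lam - (f k : ℝ)) * S k = 0 := by ring_nf; linarith
      rcases mul_eq_zero.mp this with h | h
      · exact absurd (by linarith : lam = (f k : ℝ)) (hlam k)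
      · exact h
    have hzero : ∀ i, lam * u i = 0 := fun i => by rw [hrow i, hSzero]
    constructor
    · -- m < N
      by_contra hmN
      push_neg at hmN
      have hmle : m ≤ N := by
        simpa using Fintype.card_le_of_surjective c hcsurj
      have hbij : Function.Bijective c := by
        rw [Fintype.bijective_iff_surjective_and_card]
        exact ⟨hcsurj, by simp; omega⟩
      have hxinj : Function.Injective x := by
        intro i j hij
        exact hbij.1 (hv (by rw [← hc i, ← hc j, hij]))
      -- then A u = u, so lam must be an eigenvalue with u i = lam * u i
      have : ∀ i, u i = lam * u i := by
        intro i
        have h1 : (A *ᵥ u) i = u i := by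
          rw [hmul]
          simp [hxinj.eq_iff]
        have h2 : (A *ᵥ u) i = lam * u i := by rw [hAu]; rfl
        exact h1.symm.trans h2
      apply hu
      funext i
      have := this i
      rw [hzero i] at this
      simpa using this
    · -- lam = 0
      by_contra hl0
      apply hu
      funext i
      have := hzero i
      rcases mul_eq_zero.mp this with h | h
      · exact absurd h hl0
      · simpa using h
  · rintro (⟨hmN, hl⟩ | ⟨k, hl⟩)
    · -- eigenvalue 0 : two indices in same class
      subst hl
      have : ∃ i j : Fin N, i ≠ j ∧ c i = c j := by
        have := Fintype.exists_ne_map_eq_of_card_lt c (by simpa using hmN)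
        obtain ⟨i, j, hij, h⟩ := this
        exact ⟨i, j, hij, h⟩
      obtain ⟨i₁, i₂, hne, hcc⟩ := this
      have hxx : x i₁ = x i₂ := by rw [hc i₁, hc i₂]; exact congrArg v hcc
      refine ⟨(Pi.single i₁ (1:ℝ) - Pi.single i₂ 1 : Fin N → ℝ), ?_, ?_⟩
      · intro h
        have := congrFun h i₁
        simp [Pi.single_apply, hne, hne.symm] at this
      · funext i
        rw [hmul]
        have : ∀ j, (if x i = x j then (Pi.single i₁ (1:ℝ) - Pi.single i₂ 1 : Fin N → ℝ) j else 0)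
            = (if x i = x j then (Pi.single i₁ (1:ℝ) : Fin N → ℝ) j else 0)
              - (if x i = x j then (Pi.single i₂ (1:ℝ) : Fin N → ℝ) j else 0) := by
          intro j; split <;> simp
        rw [Finset.sum_congr rfl (fun j _ => this j), Finset.sum_sub_distrib]
        have e1 : ∑ j, (if x i = x j then (Pi.single i₁ (1:ℝ) : Fin N → ℝ) j else 0)
            = if x i = x i₁ then 1 else 0 := by
          rw [Finset.sum_eq_single i₁]
          · simp
          · intro b _ hb; simp [Pi.single_apply, hb.symm]
          · simp
        have e2 : ∑ j, (if x i = x j then (Pi.single i₂ (1:ℝ) : Fin N → ℝ) j else 0)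
            = if x i = x i₂ then 1 else 0 := by
          rw [Finset.sum_eq_single i₂]
          · simp
          · intro b _ hb; simp [Pi.single_apply, hb.symm]
          · simp
        rw [e1, e2, hxx]
        simp
    · -- eigenvalue f k
      subst hl
      refine ⟨fun j => if x j = v k then 1 else 0, ?_, ?_⟩
      · obtain ⟨j, hj⟩ := hval k
        intro h
        have := congrFun h j
        simp [hj] at this
      · funext i
        rw [hmul]
        have step : ∀ j, (if x i = x j then (if x j = v k then (1:ℝ) else 0) else 0)
            = if (x i = x j ∧ x j = v k) then 1 else 0 := by
          intro j
          by_cases h1 : x i = x j <;> by_cases h2 : x j = v k <;> simp [h1, h2]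
        rw [Finset.sum_congr rfl (fun j _ => step j)]
        by_cases hi : x i = v k
        · have : ∀ j, (x i = x j ∧ x j = v k) ↔ x j = v k := by
            intro j
            constructor
            · exact fun h => h.2
            · exact fun h => ⟨hi.trans h.symm, h⟩
          simp only [this]
          rw [Finset.sum_boole]
          simp [hf k, hi]
        · have : ∀ j, ¬(x i = x j ∧ x j = v k) := by
            rintro j ⟨h1, h2⟩
            exact hi (h1.trans h2)
          simp [this, hi]
end

section
/- For the f×f matrix Q with all entries 1 except Q_{12} = Q_{21} = 0 (f ≥ 3), the characteristic polynomial of Q is λ^{f−3} (λ − 1)(λ² + (1−f)λ + (2−f)); in particular Q has the two eigenvalues (f−1 ± √(f²+2f−7))/2, which are irrational. -/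
/-!
`Q` has rank three: with `𝟙` the all-ones vector, `Q = 𝟙𝟙ᵀ - e₀e₁ᵀ - e₁e₀ᵀ = A B` where
`A = [𝟙 | e₀ | e₁]` is `f × 3`. Hence `χ_Q = X ^ (f - 3) χ_{BA}`, and the `3 × 3` matrix `BA` is
computed by hand. The two eigenvalues are the roots of the quadratic factor, so they have
eigenvectors. They are irrational because `f² + 2f - 7` lies strictly between `(f - 1)²` and
`(f + 1)²` and has the opposite parity to `f²`, so it is not a square.
-/

open Polynomial Matrix

theorem Matrix.exists_mulVec_eq_smul_of_isRoot_charpoly {ι K : Type*} [Fintype ι] [DecidableEq ι]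
    [Field K] {A : Matrix ι ι K} {μ : K} (hμ : A.charpoly.IsRoot μ) :
    ∃ v, v ≠ 0 ∧ A *ᵥ v = μ • v := by
  have : Module.End.HasEigenvalue (toLin' A) μ := by
    rw [Module.End.hasEigenvalue_iff_mem_spectrum, spectrum_toLin']
    exact mem_spectrum_of_isRoot_charpoly hμ
  obtain ⟨v, hv⟩ := this.exists_hasEigenvector
  exact ⟨v, hv.2, by simpa using hv.apply_eq_smul⟩

section OnesExceptPair

variable {ι : Type*} (R : Type*) [DecidableEq ι] [CommRing R]

def onesExceptPair (p q : ι) : Matrix ι ι R :=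
  of fun i j => if (i = p ∧ j = q) ∨ (i = q ∧ j = p) then 0 else 1

def onesExceptPairLeft (p q : ι) : Matrix ι (Fin 3) R :=
  of fun i => ![1, if i = p then 1 else 0, if i = q then 1 else 0]

def onesExceptPairRight (p q : ι) : Matrix (Fin 3) ι R :=
  of ![fun _ => 1, fun j => if j = q then -1 else 0, fun j => if j = p then -1 else 0]

variable {R}

theorem onesExceptPairLeft_mul_onesExceptPairRight {p q : ι} (hpq : p ≠ q) :
    onesExceptPairLeft R p q * onesExceptPairRight R p q = onesExceptPair R p q := by
  ext i j
  simp only [onesExceptPairLeft, onesExceptPairRight, onesExceptPair, mul_apply,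
    Fin.sum_univ_three, of_apply]
  split_ifs <;> simp_all

variable [Fintype ι]

theorem onesExceptPairRight_mul_onesExceptPairLeft {p q : ι} (hpq : p ≠ q) :
    onesExceptPairRight R p q * onesExceptPairLeft R p q =
      !![(Fintype.card ι : R), 1, 1; -1, 0, -1; -1, -1, 0] := by
  ext k l
  fin_cases k <;> fin_cases l <;>
    simp [onesExceptPairLeft, onesExceptPairRight, mul_apply, hpq, hpq.symm]

theorem charpoly_onesExceptPairRight_mul_onesExceptPairLeft {p q : ι} (hpq : p ≠ q) :
    (onesExceptPairRight R p q * onesExceptPairLeft R p q).charpoly =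
      (X - 1) * (X ^ 2 + C (1 - (Fintype.card ι : R)) * X + C (2 - (Fintype.card ι : R))) := by
  rw [onesExceptPairRight_mul_onesExceptPairLeft hpq, charpoly, det_fin_three]
  simp only [Fin.isValue, charmatrix_apply_eq, charmatrix_apply_ne, of_apply, cons_val',
    cons_val_zero, cons_val_one, cons_val, cons_val_fin_one, ne_eq, Fin.reduceEq,
    not_false_eq_true, map_natCast, map_zero, map_neg, map_one, map_sub, map_ofNat, sub_zero,
    neg_neg, mul_one, one_mul, neg_mul, sub_neg_eq_add, zero_ne_one, one_ne_zero]
  ring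

theorem charpoly_onesExceptPair {p q : ι} (hpq : p ≠ q) (hcard : 3 ≤ Fintype.card ι) :
    (onesExceptPair R p q).charpoly = X ^ (Fintype.card ι - 3) * (X - 1) *
      (X ^ 2 + C (1 - (Fintype.card ι : R)) * X + C (2 - (Fintype.card ι : R))) := by
  rw [← onesExceptPairLeft_mul_onesExceptPairRight hpq,
    charpoly_mul_comm_of_le _ _ (by simpa using hcard),
    charpoly_onesExceptPairRight_mul_onesExceptPairLeft hpq, Fintype.card_fin, mul_assoc]

end OnesExceptPair

theorem isRoot_quadratic_of_sq_eq {c s : ℝ} (hs : s ^ 2 = c ^ 2 + 2 * c - 7) :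
    (X ^ 2 + C (1 - c) * X + C (2 - c)).IsRoot ((c - 1 + s) / 2) := by
  simp only [IsRoot, eval_add, eval_pow, eval_mul, eval_C, eval_X]
  linear_combination hs / 4

theorem Int.not_isSquare_sq_add_two_mul_sub_seven {n : ℤ} (hn : 3 ≤ n) :
    ¬IsSquare (n ^ 2 + 2 * n - 7) := by
  rintro ⟨m, hm⟩
  rw [← abs_mul_abs_self] at hm
  have hlt : |m| < n + 1 := by nlinarith [abs_nonneg m]
  have hgt : n - 1 < |m| := by nlinarith [abs_nonneg m]
  obtain rfl : |m| = n := by omega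
  have : 2 * |m| = 7 := by linarith
  omega

theorem irrational_sqrt_sq_add_two_mul_sub_seven {n : ℕ} (hn : 3 ≤ n) :
    Irrational √((n : ℝ) ^ 2 + 2 * n - 7) := by
  have hn' : (3 : ℤ) ≤ n := by exact_mod_cast hn
  have := (irrational_sqrt_intCast_iff_of_nonneg (by nlinarith)).2
    (Int.not_isSquare_sq_add_two_mul_sub_seven hn')
  exact_mod_cast this

open Polynomial in
theorem Q_charpoly_and_irrational_eigenvalues (f : ℕ) (hf : 3 ≤ f)
    (Q : Matrix (Fin f) (Fin f) ℝ)
    (hQ : ∀ i j, Q i j =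
      if ((i : ℕ) = 0 ∧ (j : ℕ) = 1) ∨ ((i : ℕ) = 1 ∧ (j : ℕ) = 0) then 0 else 1) :
    Q.charpoly = X ^ (f - 3) * (X - 1) *
        (X ^ 2 + C ((1 : ℝ) - f) * X + C ((2 : ℝ) - f)) ∧
      (∃ u : Fin f → ℝ, u ≠ 0 ∧
        Q.mulVec u = ((((f : ℝ) - 1) + Real.sqrt ((f : ℝ) ^ 2 + 2 * f - 7)) / 2) • u) ∧
      (∃ w : Fin f → ℝ, w ≠ 0 ∧
        Q.mulVec w = ((((f : ℝ) - 1) - Real.sqrt ((f : ℝ) ^ 2 + 2 * f - 7)) / 2) • w) ∧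
      Irrational ((((f : ℝ) - 1) + Real.sqrt ((f : ℝ) ^ 2 + 2 * f - 7)) / 2) ∧
      Irrational ((((f : ℝ) - 1) - Real.sqrt ((f : ℝ) ^ 2 + 2 * f - 7)) / 2) := by
  have hQ' : Q = onesExceptPair ℝ (⟨0, by omega⟩ : Fin f) ⟨1, by omega⟩ := by
    ext i j
    simp [hQ, onesExceptPair, Fin.ext_iff]
  have hchar : Q.charpoly = X ^ (f - 3) * (X - 1) *
      (X ^ 2 + C ((1 : ℝ) - f) * X + C ((2 : ℝ) - f)) := by
    rw [hQ', charpoly_onesExceptPair (by simp [Fin.ext_iff]) (by simpa using hf), Fintype.card_fin]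
  have hD : (0 : ℝ) ≤ (f : ℝ) ^ 2 + 2 * f - 7 := by
    have : (3 : ℝ) ≤ f := by exact_mod_cast hf
    nlinarith
  have exists_eigenvector {s : ℝ} (hs : s ^ 2 = (f : ℝ) ^ 2 + 2 * f - 7) :
      ∃ v : Fin f → ℝ, v ≠ 0 ∧ Q *ᵥ v = (((f : ℝ) - 1 + s) / 2) • v := by
    apply exists_mulVec_eq_smul_of_isRoot_charpoly
    rw [hchar]
    exact (isRoot_quadratic_of_sq_eq hs).dvd (dvd_mul_left _ _)
  have hirr := irrational_sqrt_sq_add_two_mul_sub_seven hf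
  refine ⟨hchar, exists_eigenvector (Real.sq_sqrt hD), ?_, ?_, ?_⟩
  · rw [sub_eq_add_neg _ √_]
    exact exists_eigenvector (by rw [neg_sq]; exact Real.sq_sqrt hD)
  · simpa using (hirr.intCast_add ((f : ℤ) - 1)).div_natCast two_ne_zero
  · simpa using (hirr.intCast_sub ((f : ℤ) - 1)).div_natCast two_ne_zero
end
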